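/- Let η be a stationary n-rectifiable Radon measure on ℝ^{n+k} such that x ∈ T(η,x) for η-a.e. x ∈ ℝ^{n+k}. Suppose spt η ⊆ {x ∈ ℝ^{n+k} : x·w ≤ 0} for some w ∈ ℝ^{n+k}. Then spt η ⊆ {x ∈ ℝ^{n+k} : x·w = 0}. -/

import Mathlib

noncomputable section

open MeasureTheory Metric Filter Set Function
open scoped ENNReal NNReal Topology RealInnerProductSpace

namespace BrakkePaper

/-- Euclidean space `ℝ^d`. -/
abbrev EV (d : ℕ) : Type := EuclideanSpace ℝ (Fin d)

/-- The first `n` coordinates of a point of `ℝ^{n+k}` (the `x̂` component). -/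
def pfst (n k : ℕ) (x : EV (n + k)) : EV n := WithLp.toLp 2 (fun i => x (Fin.castAdd k i))

/-- The last `k` coordinates of a point of `ℝ^{n+k}` (the `x̃` component). -/
def psnd (n k : ℕ) (x : EV (n + k)) : EV k := WithLp.toLp 2 (fun j => x (Fin.natAdd n j))

/-- Assemble a point of `ℝ^{n+k}` from its two components. -/
def pairEV (n k : ℕ) (y : EV n) (z : EV k) : EV (n + k) := WithLp.toLp 2 (fun i =>
  Fin.addCases (motive := fun _ => ℝ) (fun i₁ => y i₁) (fun j => z j) i)

/-- The open cylinder `C(a,r,h) = Bⁿ(â,r) × Bᵏ(ã,h)`. -/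
def cyl (n k : ℕ) (a : EV (n + k)) (r h : ℝ) : Set (EV (n + k)) :=
  {x | dist (pfst n k x) (pfst n k a) < r ∧ dist (psnd n k x) (psnd n k a) < h}

/-- The graph of `u : ℝⁿ → ℝᵏ` over the set `s ⊆ ℝⁿ`, as a subset of `ℝ^{n+k}`. -/
def graphOver (n k : ℕ) (s : Set (EV n)) (u : EV n → EV k) : Set (EV (n + k)) :=
  {x | pfst n k x ∈ s ∧ psnd n k x = u (pfst n k x)}

/-- `ωₙ`, the volume of the unit ball in `ℝⁿ`. -/
def unitBallVol (n : ℕ) : ℝ≥0∞ := volume (ball (0 : EV n) 1)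

/-- The support of a measure. -/
def spt {d : ℕ} (μ : Measure (EV d)) : Set (EV d) :=
  {x | ∀ r : ℝ, 0 < r → 0 < μ (ball x r)}

/-- `T` is the approximate tangent space of `μ` at `x` with multiplicity `θ`. -/
def IsApproxTangent (n : ℕ) {d : ℕ} (μ : Measure (EV d)) (x : EV d)
    (T : Submodule ℝ (EV d)) (θ : ℝ) : Prop :=
  Module.finrank ℝ T = n ∧
    ∀ φ : EV d → ℝ, Continuous φ → HasCompactSupport φ →
      Tendsto (fun lam : ℝ => (lam ^ n)⁻¹ * ∫ y, φ (lam⁻¹ • (y - x)) ∂μ)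
        (𝓝[>] (0 : ℝ))
        (𝓝 (θ * ∫ y in (T : Set (EV d)), φ y ∂(μH[n] : Measure (EV d))))

/-- `μ` is `n`-rectifiable. -/
def Rectifiable (n : ℕ) {d : ℕ} (μ : Measure (EV d)) : Prop :=
  ∀ᵐ x ∂μ, ∃ T θ, IsApproxTangent n μ x T θ

/-- `μ` is integer `n`-rectifiable. -/
def IntegerRectifiable (n : ℕ) {d : ℕ} (μ : Measure (EV d)) : Prop :=
  ∀ᵐ x ∂μ, ∃ T, ∃ m : ℕ, 0 < m ∧ IsApproxTangent n μ x T (m : ℝ)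

/-- `μ` has unit density. -/
def UnitDensity (n : ℕ) {d : ℕ} (μ : Measure (EV d)) : Prop :=
  ∀ᵐ x ∂μ, ∃ T, IsApproxTangent n μ x T 1

/-- Orthogonal projection onto the subspace `T`. -/
def tangProj {d : ℕ} (T : Submodule ℝ (EV d)) (v : EV d) : EV d :=
  ((Submodule.orthogonalProjectionOnto T v : T) : EV d)

/-- Orthogonal projection onto the orthogonal complement of `T`. -/
def normalProj {d : ℕ} (T : Submodule ℝ (EV d)) (v : EV d) : EV d :=
  ((Submodule.orthogonalProjectionOnto Tᗮ v : Tᗮ) : EV d)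

/-- The tangential divergence `div_T φ (x) = trace (P_T ∘ Dφ(x))`. -/
def tangentialDiv {d : ℕ} (T : Submodule ℝ (EV d)) (φ : EV d → EV d) (x : EV d) : ℝ :=
  LinearMap.trace ℝ (EV d)
    ((T.subtype.comp (Submodule.orthogonalProjectionOnto T).toLinearMap).comp (fderiv ℝ φ x).toLinearMap)

/-- `μ` has generalized mean curvature vector `H` in `U`, with tangent field `τ`. -/
def HasGenMeanCurv (n : ℕ) {d : ℕ} (μ : Measure (EV d)) (U : Set (EV d))
    (H : EV d → EV d) (τ : EV d → Submodule ℝ (EV d)) : Prop :=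
  (∀ᵐ x ∂μ.restrict U, ∃ θ : ℝ, IsApproxTangent n (μ.restrict U) x (τ x) θ) ∧
  LocallyIntegrable H (μ.restrict U) ∧
  ∀ φ : EV d → EV d, ContDiff ℝ 1 φ → HasCompactSupport φ → tsupport φ ⊆ U →
    ∫ x, tangentialDiv (τ x) φ x ∂(μ.restrict U) = ∫ x, ⟪H x, φ x⟫ ∂(μ.restrict U)

/-- The technical conditions in the definition of the Brakke variation `𝓑(μ,φ)`. -/
def BrakkeCond (n : ℕ) {d : ℕ} (μ : Measure (EV d)) (φ : EV d → ℝ)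
    (H : EV d → EV d) (τ : EV d → Submodule ℝ (EV d)) : Prop :=
  Rectifiable n (μ.restrict {x | 0 < φ x}) ∧
  HasGenMeanCurv n μ {x | 0 < φ x} H τ ∧
  IntegrableOn (fun x => ‖H x‖ ^ 2) {x | 0 < φ x} μ

/-- The integrand of the Brakke variation. -/
def brakkeIntegrand {d : ℕ} (φ : EV d → ℝ) (H : EV d → EV d)
    (τ : EV d → Submodule ℝ (EV d)) (x : EV d) : ℝ :=
  ⟪normalProj (τ x) (gradient φ x), H x⟫ - φ x * ‖H x‖ ^ 2

open Classical in
/-- The Brakke variation `𝓑(μ,φ)`, an extended real number which is `⊥` when the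
technical conditions fail. -/
def brakkeVar (n : ℕ) {d : ℕ} (μ : Measure (EV d)) (φ : EV d → ℝ) : EReal :=
  if h : ∃ p : (EV d → EV d) × (EV d → Submodule ℝ (EV d)), BrakkeCond n μ φ p.1 p.2 then
    ((∫ x in {x | 0 < φ x}, brakkeIntegrand φ h.choose.1 h.choose.2 x ∂μ : ℝ) : EReal)
  else (⊥ : EReal)

/-- `(μ_t)_{t ∈ [t₁,t₂]}` is a Brakke flow in the open set `U`. -/
structure IsBrakkeFlowIn (n : ℕ) {d : ℕ} (μ : ℝ → Measure (EV d)) (U : Set (EV d))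
    (t₁ t₂ : ℝ) : Prop where
  radon : ∀ t ∈ Icc t₁ t₂, ∀ K : Set (EV d), IsCompact K → μ t K ≠ ∞
  aeRect : ∀ᵐ t ∂(volume.restrict (Ioo t₁ t₂)), IntegerRectifiable n ((μ t).restrict U)
  ineq : ∀ s₁ s₂ : ℝ, t₁ ≤ s₁ → s₁ < s₂ → s₂ ≤ t₂ →
    ∀ φ : ℝ → EV d → ℝ,
      ContinuousOn (fun q : ℝ × EV d => φ q.1 q.2) (Icc s₁ s₂ ×ˢ U) →
      ContDiffOn ℝ 1 (fun q : ℝ × EV d => φ q.1 q.2) (Ioo s₁ s₂ ×ˢ U) →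
      (∀ t ∈ Icc s₁ s₂, IsCompact (tsupport (φ t)) ∧ tsupport (φ t) ⊆ U) →
      (∀ᵐ t ∂(volume.restrict (Ioo s₁ s₂)), brakkeVar n (μ t) (φ t) ≠ ⊥) ∧
      (∫ x, φ s₂ x ∂(μ s₂)) - (∫ x, φ s₁ x ∂(μ s₁)) ≤
        ∫ t in Ioo s₁ s₂,
          ((brakkeVar n (μ t) (φ t)).toReal + ∫ x, deriv (fun s => φ s x) t ∂(μ t))

/-- An integral Brakke flow in `U`. -/
def IsIntegralBrakkeFlowIn (n : ℕ) {d : ℕ} (μ : ℝ → Measure (EV d)) (U : Set (EV d))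
    (t₁ t₂ : ℝ) : Prop :=
  IsBrakkeFlowIn n μ U t₁ t₂ ∧ ∀ t ∈ Icc t₁ t₂, IntegerRectifiable n (μ t)

/-! ### Smooth mean curvature flow -/

/-- Standard basis vector of `ℝⁿ`. -/
def stdB (n : ℕ) (i : Fin n) : EV n := EuclideanSpace.single i 1

/-- Partial derivative `∂ᵢ F`. -/
def pderiv1 {n d : ℕ} (F : EV n → EV d) (i : Fin n) (p : EV n) : EV d :=
  fderiv ℝ F p (stdB n i)

/-- The tangent space of the parametrized surface `F` at the parameter `p`. -/
def tangentAt {n d : ℕ} (F : EV n → EV d) (p : EV n) : Submodule ℝ (EV d) :=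
  Submodule.span ℝ (Set.range fun i => pderiv1 F i p)

/-- The induced metric `g_{ij}`. -/
def gMat {n d : ℕ} (F : EV n → EV d) (p : EV n) : Matrix (Fin n) (Fin n) ℝ :=
  Matrix.of fun i j => ⟪pderiv1 F i p, pderiv1 F j p⟫

/-- The second fundamental form `A_{ij} = (∂ᵢ∂ⱼF)^⊥`. -/
def secondFF {n d : ℕ} (F : EV n → EV d) (p : EV n) (i j : Fin n) : EV d :=
  normalProj (tangentAt F p) (pderiv1 (fun q => pderiv1 F i q) j p)

/-- The mean curvature vector `H = g^{ij} A_{ij}`. -/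
def meanCurv {n d : ℕ} (F : EV n → EV d) (p : EV n) : EV d :=
  ∑ i : Fin n, ∑ j : Fin n, ((gMat F p)⁻¹ i j) • secondFF F p i j

/-- Christoffel symbols `Γ^l_{ij}`. -/
def christoffel {n d : ℕ} (F : EV n → EV d) (p : EV n) (i j l : Fin n) : ℝ :=
  ∑ r : Fin n, ((gMat F p)⁻¹ l r) * ⟪pderiv1 (fun q => pderiv1 F i q) j p, pderiv1 F r p⟫

/-- The covariant derivative (with respect to the induced connection, using the normal
connection in the normal bundle) of a normal-bundle valued covariant `m`-tensor field. -/
def covDeriv {n d : ℕ} (F : EV n → EV d) {m : ℕ}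
    (T : (Fin m → Fin n) → EV n → EV d) : (Fin (m + 1) → Fin n) → EV n → EV d :=
  fun idx p =>
    normalProj (tangentAt F p) (fderiv ℝ (T (Fin.tail idx)) p (stdB n (idx 0)))
      - ∑ a : Fin m, ∑ q : Fin n,
          christoffel F p (idx 0) (Fin.tail idx a) q • T (Function.update (Fin.tail idx) a q) p

/-- The iterated covariant derivative `∇^m A` of the second fundamental form. -/
def covA {n d : ℕ} (F : EV n → EV d) : (m : ℕ) → (Fin (m + 2) → Fin n) → EV n → EV d
  | 0 => fun idx p => secondFF F p (idx 0) (idx 1)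
  | (m + 1) => covDeriv F (covA F m)

/-- The squared norm (with respect to the induced metric) of a covariant tensor field. -/
def tensorNormSq {n d : ℕ} (F : EV n → EV d) {m : ℕ}
    (T : (Fin m → Fin n) → EV n → EV d) (p : EV n) : ℝ :=
  ∑ idx : Fin m → Fin n, ∑ idx' : Fin m → Fin n,
    (∏ a : Fin m, ((gMat F p)⁻¹ (idx a) (idx' a))) * ⟪T idx p, T idx' p⟫

/-- `|∇^m A|²` at the parameter `p`. -/
def normSqCovA {n d : ℕ} (F : EV n → EV d) (m : ℕ) (p : EV n) : ℝ :=
  tensorNormSq F (covA F m) p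

/-- A smooth family of embeddings of `Ω` parametrized by `I`. -/
def IsSmoothEmbeddingFamily {n d : ℕ} (F : ℝ → EV n → EV d) (I : Set ℝ)
    (Ω : Set (EV n)) : Prop :=
  ContDiffOn ℝ (⊤ : ℕ∞) (fun q : ℝ × EV n => F q.1 q.2) (I ×ˢ Ω) ∧
  ∀ t ∈ I, InjOn (F t) Ω ∧ ∀ p ∈ Ω, ∀ v : EV n, fderiv ℝ (F t) p v = 0 → v = 0

/-- `F` moves by smooth mean curvature flow: `(∂ₜ F)^⊥ = H`. -/
def MovesByMCF {n d : ℕ} (F : ℝ → EV n → EV d) (I : Set ℝ) (Ω : Set (EV n)) : Prop :=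
  ∀ t ∈ I, ∀ p ∈ Ω,
    normalProj (tangentAt (F t) p) (deriv (fun s => F s p) t) = meanCurv (F t) p

/-- The graph parametrization `x̂ ↦ (x̂, u(x̂))`. -/
def graphMap (n k : ℕ) (u : EV n → EV k) : EV n → EV (n + k) :=
  fun x => pairEV n k x (u x)

/-- The family of graphs of `u(t,·)` moves by smooth mean curvature flow. -/
def GraphMovesByMCF (n k : ℕ) (u : ℝ → EV n → EV k) (I : Set ℝ) (Ω : Set (EV n)) : Prop :=
  MovesByMCF (fun t => graphMap n k (u t)) I Ω

/-- Huisken's backward heat kernel `Φ_{(t₀,x₀)}`. -/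
def gaussK (n : ℕ) {d : ℕ} (t₀ : ℝ) (x₀ : EV d) (t : ℝ) (x : EV d) : ℝ :=
  (4 * Real.pi * (t₀ - t)) ^ (-(n : ℝ) / 2) * Real.exp (‖x - x₀‖ ^ 2 / (4 * (t - t₀)))

/-- The localization `φ_{(t₀,x₀),ρ}`. -/
def gaussCut (n : ℕ) {d : ℕ} (t₀ : ℝ) (x₀ : EV d) (ρ : ℝ) (t : ℝ) (x : EV d) : ℝ :=
  (max (1 - (ρ ^ 2)⁻¹ * (‖x - x₀‖ ^ 2 + 2 * n * (t - t₀))) 0) ^ 3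

/-- `S` is `m`-rectifiable as a set. -/
def SetRectifiable (m : ℕ) {d : ℕ} (S : Set (EV d)) : Prop :=
  ∃ (f : ℕ → EV m → EV d) (s : ℕ → Set (EV m)),
    (∀ i, ∃ K : ℝ≥0, LipschitzOnWith K (f i) (s i)) ∧
    (μH[m] : Measure (EV d)) (S \ ⋃ i, f i '' s i) = 0

private lemma hasDerivAt_cut (R s : ℝ) :
    HasDerivAt (fun t : ℝ => max (R - t) 0 ^ 2) (-(2 * max (R - s) 0)) s := by
  rcases lt_trichotomy s R with h | h | h
  · have hev : (fun t : ℝ => (R - t) ^ 2) =ᶠ[𝓝 s] fun t : ℝ => max (R - t) 0 ^ 2 := by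
      filter_upwards [Iio_mem_nhds h] with t ht
      rw [max_eq_left (by simp only [mem_Iio] at ht; linarith : (0:ℝ) ≤ R - t)]
    have h1 : HasDerivAt (fun t : ℝ => R - t) (-1) s := (hasDerivAt_id s).const_sub R
    have h2 := h1.fun_pow 2
    have h3 : HasDerivAt (fun t : ℝ => (R - t) ^ 2) (-(2 * max (R - s) 0)) s := by
      refine h2.congr_deriv ?_
      rw [max_eq_left (by linarith : (0:ℝ) ≤ R - s)]
      ring
    exact h3.congr_of_eventuallyEq hev.symm
  · subst h
    have h0 : -(2 * max (s - s) 0) = 0 := by simp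
    rw [h0, hasDerivAt_iff_tendsto_slope]
    have hb : ∀ t : ℝ, ‖slope (fun t : ℝ => max (s - t) 0 ^ 2) s t‖ ≤ |t - s| := by
      intro t
      rcases eq_or_ne t s with rfl | ht
      · simp [slope]
      · have hts : (0:ℝ) < |t - s| := by
          rw [abs_pos]; exact sub_ne_zero.2 ht
        have h1 : max (s - t) 0 ≤ |s - t| := max_le (le_abs_self _) (abs_nonneg _)
        have h2 : max (s - t) 0 ^ 2 ≤ (t - s) ^ 2 := by
          calc max (s - t) 0 ^ 2 ≤ |s - t| ^ 2 := by
                exact pow_le_pow_left₀ (le_max_right _ _) h1 2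
            _ = (t - s) ^ 2 := by rw [sq_abs]; ring
        have hslope : slope (fun t : ℝ => max (s - t) 0 ^ 2) s t
            = (max (s - t) 0 ^ 2) / (t - s) := by
          simp only [slope, vsub_eq_sub]
          rw [div_eq_inv_mul]
          norm_num
        rw [hslope]
        rw [Real.norm_eq_abs, abs_div]
        rw [div_le_iff₀ hts]
        calc |max (s - t) 0 ^ 2| = max (s - t) 0 ^ 2 := by
              exact abs_of_nonneg (sq_nonneg _)
          _ ≤ (t - s) ^ 2 := h2
          _ = |t - s| * |t - s| := by rw [← abs_mul, abs_of_nonneg (mul_self_nonneg _)]; ring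
    refine squeeze_zero_norm hb ?_
    have : Tendsto (fun t : ℝ => |t - s|) (𝓝 s) (𝓝 0) := by
      have : Tendsto (fun t : ℝ => |t - s|) (𝓝 s) (𝓝 |s - s|) :=
        ((continuous_id.sub continuous_const).abs).tendsto s
      simpa using this
    exact this.mono_left nhdsWithin_le_nhds
  · have hev : (fun _ : ℝ => (0:ℝ)) =ᶠ[𝓝 s] fun t : ℝ => max (R - t) 0 ^ 2 := by
      filter_upwards [Ioi_mem_nhds h] with t ht
      rw [max_eq_right (by simp only [mem_Ioi] at ht; linarith : R - t ≤ 0)]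
      simp
    have h3 : HasDerivAt (fun _ : ℝ => (0:ℝ)) (-(2 * max (R - s) 0)) s := by
      have : max (R - s) 0 = 0 := max_eq_right (by linarith)
      rw [this]
      simpa using hasDerivAt_const s (0:ℝ)
    exact h3.congr_of_eventuallyEq hev.symm

private lemma trace_smulRight {E : Type*} [NormedAddCommGroup E] [NormedSpace ℝ E]
    [FiniteDimensional ℝ E] (ℓ : E →ₗ[ℝ] ℝ) (u : E) :
    LinearMap.trace ℝ E (ℓ.smulRight u) = ℓ u := by
  have h : ℓ.smulRight u = (LinearMap.toSpanSingleton ℝ E u) ∘ₗ ℓ := by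
    ext v
    simp [LinearMap.toSpanSingleton_apply, LinearMap.smulRight_apply, smul_eq_mul]
  rw [h, LinearMap.trace_comp_comm']
  have h2 : ℓ ∘ₗ LinearMap.toSpanSingleton ℝ E u = (ℓ u) • LinearMap.id := by
    apply LinearMap.ext_ring
    simp [LinearMap.toSpanSingleton_apply]
  rw [h2, (LinearMap.trace ℝ ℝ).map_smul, LinearMap.trace_id]
  simp


/-- Lemma 3.2: a stationary cone contained in a half space lies in the boundary
hyperplane. -/
theorem halfspace_support (n k : ℕ) (hn : 0 < n) (hk : 0 < k)
    (η : Measure (EV (n + k)))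
    (hRadon : ∀ K : Set (EV (n + k)), IsCompact K → η K ≠ ∞)
    (τ : EV (n + k) → Submodule ℝ (EV (n + k)))
    (hτ : ∀ᵐ x ∂η, (∃ θ : ℝ, IsApproxTangent n η x (τ x) θ) ∧ x ∈ τ x)
    (hstat : ∀ φ : EV (n + k) → EV (n + k), ContDiff ℝ 1 φ → HasCompactSupport φ →
        ∫ x, tangentialDiv (τ x) φ x ∂η = 0)
    (w : EV (n + k))
    (hw : spt η ⊆ {x | ⟪x, w⟫ ≤ 0}) :
    spt η ⊆ {x | ⟪x, w⟫ = 0} := by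
  classical
  haveI : IsFiniteMeasureOnCompacts η := ⟨fun K hK => (hRadon K hK).lt_top⟩
  have hsptc : η (spt η)ᶜ = 0 := by
    apply measure_null_of_locally_null
    intro x hx
    simp only [spt, mem_compl_iff, mem_setOf_eq] at hx
    push_neg at hx
    obtain ⟨r, hr, hxr⟩ := hx
    exact ⟨ball x r, mem_nhdsWithin_of_mem_nhds (ball_mem_nhds x hr), le_zero_iff.mp hxr⟩
  have hae_spt : ∀ᵐ x ∂η, x ∈ spt η := by
    rw [ae_iff]
    exact hsptc
  have hae_le : ∀ᵐ x ∂η, ⟪x, w⟫ ≤ 0 := hae_spt.mono fun x hx => hw hx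
  have hae_tan : ∀ᵐ x ∂η, x ∈ τ x := hτ.mono fun x hx => hx.2
  have key : ∀ N : ℕ, ∀ᵐ x ∂η, max ((N : ℝ) - ⟪x, x⟫) 0 * ⟪x, w⟫ = 0 := by
    intro N
    set R : ℝ := (N : ℝ) with hR
    have hR0 : (0 : ℝ) ≤ R := Nat.cast_nonneg N
    set q : EV (n + k) → ℝ := fun x => ⟪x, x⟫ with hq
    set φ : EV (n + k) → EV (n + k) := fun x => (max (R - q x) 0 ^ 2) • w with hphi
    have hzero : ∀ x : EV (n + k), x ∉ closedBall (0 : EV (n + k)) (Real.sqrt R) →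
        max (R - q x) 0 = 0 := by
      intro x hx
      simp only [mem_closedBall, dist_zero_right, not_le] at hx
      have h2 : q x = ‖x‖ ^ 2 := real_inner_self_eq_norm_sq x
      have h1 : Real.sqrt R ^ 2 = R := Real.sq_sqrt hR0
      have : R < q x := by nlinarith [Real.sqrt_nonneg R]
      exact max_eq_right (by linarith)
    have hder : ∀ x, HasFDerivAt φ
        (((-(2 * max (R - q x) 0)) • ((fderivInnerCLM ℝ (x, x)).comp
          ((ContinuousLinearMap.id ℝ (EV (n + k))).prod
           (ContinuousLinearMap.id ℝ (EV (n + k)))))).smulRight w) x := by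
      intro x
      have h1 : HasFDerivAt q
          ((fderivInnerCLM ℝ (x, x)).comp
            ((ContinuousLinearMap.id ℝ (EV (n + k))).prod
             (ContinuousLinearMap.id ℝ (EV (n + k))))) x :=
        (hasFDerivAt_id x).inner ℝ (hasFDerivAt_id x)
      have h2 := (hasDerivAt_cut R (q x)).comp_hasFDerivAt x h1
      exact h2.smul_const w
    have hsmooth : ContDiff ℝ 1 φ := by
      have hg : ContDiff ℝ 1 (fun t : ℝ => max (R - t) 0 ^ 2) := by
        rw [contDiff_one_iff_deriv]
        constructor
        · exact fun t => (hasDerivAt_cut R t).differentiableAt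
        · have hd : (deriv fun t : ℝ => max (R - t) 0 ^ 2)
              = fun t : ℝ => -(2 * max (R - t) 0) := by
            funext t; exact (hasDerivAt_cut R t).deriv
          rw [hd]
          exact (continuous_const.mul ((continuous_const.sub continuous_id).max continuous_const)).neg
      have hqc : ContDiff ℝ 1 q := contDiff_id.inner ℝ contDiff_id
      exact (hg.comp hqc).smul contDiff_const
    have hφsupp : HasCompactSupport φ := by
      apply HasCompactSupport.intro (isCompact_closedBall (0 : EV (n + k)) (Real.sqrt R))
      intro x hx
      show (max (R - q x) 0 ^ 2) • w = 0
      rw [hzero x hx]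
      simp
    have hstat0 := hstat φ hsmooth hφsupp
    set G : EV (n + k) → ℝ := fun x => -(2 * max (R - q x) 0) * (2 * ⟪x, w⟫) with hG
    have hpt : ∀ x, x ∈ τ x → tangentialDiv (τ x) φ x = G x := by
      intro x hx
      have hf : fderiv ℝ φ x = (((-(2 * max (R - q x) 0)) • ((fderivInnerCLM ℝ (x, x)).comp
          ((ContinuousLinearMap.id ℝ (EV (n + k))).prod
           (ContinuousLinearMap.id ℝ (EV (n + k)))))).smulRight w) := (hder x).fderiv
      unfold tangentialDiv
      rw [hf]
      set T := τ x with hT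
      set S : EV (n + k) →ₗ[ℝ] EV (n + k) :=
        T.subtype.comp (Submodule.orthogonalProjectionOnto T).toLinearMap with hS
      set L : EV (n + k) →L[ℝ] ℝ := ((-(2 * max (R - q x) 0)) • ((fderivInnerCLM ℝ (x, x)).comp
          ((ContinuousLinearMap.id ℝ (EV (n + k))).prod
           (ContinuousLinearMap.id ℝ (EV (n + k)))))) with hL
      have hcomp : S.comp (L.smulRight w).toLinearMap
          = LinearMap.smulRight (L : EV (n + k) →ₗ[ℝ] ℝ) (S w) := by
        ext v
        simp [hS, _root_.map_smul]
      rw [hcomp, trace_smulRight]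
      have hSw : S w = ((Submodule.orthogonalProjectionOnto T w : T) : EV (n + k)) := by
        simp [hS]
      have hPx : ((Submodule.orthogonalProjectionOnto T x : T) : EV (n + k)) = x :=
        Submodule.starProjection_eq_self_iff.2 hx
      have h1 : ⟪x, ((Submodule.orthogonalProjectionOnto T w : T) : EV (n + k))⟫ = ⟪x, w⟫ := by
        have h : ⟪((Submodule.orthogonalProjectionOnto T x : T) : EV (n + k)), w⟫
            = ⟪x, ((Submodule.orthogonalProjectionOnto T w : T) : EV (n + k))⟫ :=
          Submodule.inner_starProjection_left_eq_right (K := T) x w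
        rw [hPx] at h
        exact h.symm
      have h2 : ⟪((Submodule.orthogonalProjectionOnto T w : T) : EV (n + k)), x⟫ = ⟪x, w⟫ := by
        rw [real_inner_comm]; exact h1
      have hLv : (L : EV (n + k) →ₗ[ℝ] ℝ) (S w)
          = -(2 * max (R - q x) 0) * (⟪x, S w⟫ + ⟪S w, x⟫) := by
        simp [hL, fderivInnerCLM_apply, smul_eq_mul]
      rw [hLv, hSw, h1, h2, hG]
      ring
    have hcont : Continuous G := by
      have c1 : Continuous q := continuous_id.inner continuous_id
      have c2 : Continuous fun x : EV (n + k) => ⟪x, w⟫ := continuous_id.inner continuous_const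
      exact (continuous_const.mul ((continuous_const.sub c1).max continuous_const)).neg.mul
        (continuous_const.mul c2)
    have hGsupp : HasCompactSupport G := by
      apply HasCompactSupport.intro (isCompact_closedBall (0 : EV (n + k)) (Real.sqrt R))
      intro x hx
      show -(2 * max (R - q x) 0) * (2 * ⟪x, w⟫) = 0
      rw [hzero x hx]
      ring
    have hGint : Integrable G η := hcont.integrable_of_hasCompactSupport hGsupp
    have hGeq : (fun x => tangentialDiv (τ x) φ x) =ᵐ[η] G :=
      hae_tan.mono fun x hx => hpt x hx
    have hGzero : ∫ x, G x ∂η = 0 := (integral_congr_ae hGeq).symm.trans hstat0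
    have hGnonneg : 0 ≤ᵐ[η] G := by
      filter_upwards [hae_le] with x hx
      have hM : (0 : ℝ) ≤ max (R - q x) 0 := le_max_right _ _
      show (0 : ℝ) ≤ -(2 * max (R - q x) 0) * (2 * ⟪x, w⟫)
      nlinarith [mul_nonpos_of_nonneg_of_nonpos hM hx]
    have hG0 : G =ᵐ[η] 0 := (integral_eq_zero_iff_of_nonneg_ae hGnonneg hGint).1 hGzero
    filter_upwards [hG0] with x hx
    have hx' : -(2 * max (R - q x) 0) * (2 * ⟪x, w⟫) = 0 := hx
    have h4 : (-4 : ℝ) * (max (R - ⟪x, x⟫) 0 * ⟪x, w⟫) = 0 := by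
      have hqx : q x = ⟪x, x⟫ := rfl
      rw [← hqx]
      linear_combination hx'
    linarith
  have hae0 : ∀ᵐ x ∂η, ⟪x, w⟫ = 0 := by
    filter_upwards [ae_all_iff.2 key] with x hx
    obtain ⟨N, hN⟩ := exists_nat_gt (⟪x, x⟫ : ℝ)
    have hmax : (0 : ℝ) < max ((N : ℝ) - ⟪x, x⟫) 0 := lt_max_iff.2 (Or.inl (by linarith))
    rcases mul_eq_zero.1 (hx N) with h | h
    · exact absurd h hmax.ne'
    · exact h
  intro x hx
  show ⟪x, w⟫ = 0
  by_contra hne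
  have hcont : Continuous fun y : EV (n + k) => (⟪y, w⟫ : ℝ) :=
    continuous_id.inner continuous_const
  have hopen : IsOpen {y : EV (n + k) | (⟪y, w⟫ : ℝ) ≠ 0} :=
    isOpen_compl_singleton.preimage hcont
  obtain ⟨r, hr, hball⟩ := Metric.isOpen_iff.1 hopen x hne
  have h0 : η (ball x r) = 0 := measure_mono_null hball (ae_iff.1 hae0)
  exact absurd h0 (hx r hr).ne'

end BrakkePaper
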